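/- arXiv:1708.04797 — 2 statements merged into one kernel-verified Lean document; each statement's English description precedes it below -/
import Mathlib

section
/- Projection-based sufficient condition for inclusion in a Minkowski sum: Let Ω = {x ∈ ℝ^n : Hx ≤ h}, Γ = {y ∈ ℝ^m : Fy ≤ f}, Δ = {z ∈ ℝ^p : Gz ≤ g} be polyhedra, and P ∈ ℝ^{n×m}, Q ∈ ℝ^{n×p}. Define Ω_⊕ = {(x,y,z) : x = Py + Qz, Fy ≤ f, Gz ≤ g} ⊆ ℝ^{n+m+p} and Ω̄ = Ω × {0} × {0} ⊆ ℝ^{n+m+p}. If there exists a linear map M : ℝ^{n+m+p} → ℝ^{n+m+p} satisfying proj_x(M w) = proj_x(w) for all w (where proj_x(x,y,z) = x) such that Ω̄ ⊆ M⁻¹ Ω_⊕, then Ω ⊆ PΓ ⊕ QΔ. -/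
open Pointwise

theorem stmt13 {n m p nh nf ng : ℕ}
    (H : Matrix (Fin nh) (Fin n) ℝ) (h : Fin nh → ℝ)
    (F : Matrix (Fin nf) (Fin m) ℝ) (f : Fin nf → ℝ)
    (G : Matrix (Fin ng) (Fin p) ℝ) (g : Fin ng → ℝ)
    (P : Matrix (Fin n) (Fin m) ℝ) (Q : Matrix (Fin n) (Fin p) ℝ)
    (M : ((Fin n → ℝ) × (Fin m → ℝ) × (Fin p → ℝ)) →ₗ[ℝ]
         ((Fin n → ℝ) × (Fin m → ℝ) × (Fin p → ℝ)))
    (hM : ∀ w, (M w).1 = w.1)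
    (hincl : {w : (Fin n → ℝ) × (Fin m → ℝ) × (Fin p → ℝ) |
        w.1 ∈ {x | H.mulVec x ≤ h} ∧ w.2.1 = 0 ∧ w.2.2 = 0} ⊆
      M ⁻¹' {w : (Fin n → ℝ) × (Fin m → ℝ) × (Fin p → ℝ) |
        w.1 = P.mulVec w.2.1 + Q.mulVec w.2.2 ∧ F.mulVec w.2.1 ≤ f ∧ G.mulVec w.2.2 ≤ g}) :
    {x : Fin n → ℝ | H.mulVec x ≤ h} ⊆
      P.mulVec '' {y | F.mulVec y ≤ f} + Q.mulVec '' {z | G.mulVec z ≤ g} := by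
  intro x hx
  have hw := hincl (show ((x, 0, 0) : (Fin n → ℝ) × (Fin m → ℝ) × (Fin p → ℝ)) ∈ _ from
    ⟨hx, rfl, rfl⟩)
  obtain ⟨heq, hF, hG⟩ := hw
  rw [hM] at heq
  exact ⟨P.mulVec (M (x,0,0)).2.1, ⟨_, hF, rfl⟩, Q.mulVec (M (x,0,0)).2.2, ⟨_, hG, rfl⟩, heq.symm⟩
end

section
/- Control invariance of the convexified union of backward reachable sets: Consider x⁺ = Ax + Bu with u constrained to a convex set U ⊆ ℝ^m, a convex set Ω ⊆ ℝ^n, and define Ω_k = {x ∈ ℝ^n : A^k x + Σ_{i=0}^{k-1} A^i B u_{i+1} ∈ Ω for some u_1,…,u_k ∈ U} for k ≥ 1, with Ω_0 = Ω. If Ω ⊆ conv(⋃_{k=1}^N Ω_k), then Ω_∞ = conv(⋃_{k=1}^N Ω_k) is control invariant: for every x ∈ Ω_∞ there exists u ∈ U with Ax + Bu ∈ Ω_∞. -/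
open Pointwise

/-- The set of states steerable into `Ω` in exactly `k` steps with inputs in `U`. -/
def stepSet {n m : ℕ} (A : Matrix (Fin n) (Fin n) ℝ) (B : Matrix (Fin n) (Fin m) ℝ)
    (U : Set (Fin m → ℝ)) (Ω : Set (Fin n → ℝ)) (k : ℕ) : Set (Fin n → ℝ) :=
  {x | ∃ u : Fin k → (Fin m → ℝ), (∀ i, u i ∈ U) ∧
    (A ^ k).mulVec x + ∑ i : Fin k, (A ^ (i : ℕ)).mulVec (B.mulVec (u i)) ∈ Ω}

theorem stmt16 {n m : ℕ} (A : Matrix (Fin n) (Fin n) ℝ) (B : Matrix (Fin n) (Fin m) ℝ)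
    (U : Set (Fin m → ℝ)) (Ω : Set (Fin n → ℝ))
    (hU : Convex ℝ U) (hΩ : Convex ℝ Ω) (N : ℕ)
    (hstop : Ω ⊆ convexHull ℝ (⋃ k ∈ Finset.Icc 1 N, stepSet A B U Ω k)) :
    ∀ x ∈ convexHull ℝ (⋃ k ∈ Finset.Icc 1 N, stepSet A B U Ω k),
      ∃ u ∈ U, A.mulVec x + B.mulVec u ∈
        convexHull ℝ (⋃ k ∈ Finset.Icc 1 N, stepSet A B U Ω k) := by
  set C := convexHull ℝ (⋃ k ∈ Finset.Icc 1 N, stepSet A B U Ω k) with hC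
  have hSconv : Convex ℝ {x : Fin n → ℝ | ∃ u ∈ U, A.mulVec x + B.mulVec u ∈ C} := by
    rintro x ⟨u, hu, hxu⟩ y ⟨v, hv, hyv⟩ a b ha hb hab
    refine ⟨a • u + b • v, hU hu hv ha hb hab, ?_⟩
    have heq : A.mulVec (a • x + b • y) + B.mulVec (a • u + b • v)
        = a • (A.mulVec x + B.mulVec u) + b • (A.mulVec y + B.mulVec v) := by
      simp only [Matrix.mulVec_add, Matrix.mulVec_smul, smul_add]
      abel
    rw [heq]
    exact (convex_convexHull ℝ _) hxu hyv ha hb hab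
  have hsub : (⋃ k ∈ Finset.Icc 1 N, stepSet A B U Ω k)
      ⊆ {x : Fin n → ℝ | ∃ u ∈ U, A.mulVec x + B.mulVec u ∈ C} := by
    intro x hx
    rw [Set.mem_iUnion₂] at hx
    obtain ⟨k, hk, hxk⟩ := hx
    rw [Finset.mem_Icc] at hk
    obtain ⟨k', rfl⟩ : ∃ k', k = k' + 1 := ⟨k - 1, by omega⟩
    obtain ⟨u, hu, hmem⟩ := hxk
    refine ⟨u (Fin.last k'), hu _, ?_⟩
    have key : (A ^ k').mulVec (A.mulVec x + B.mulVec (u (Fin.last k')))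
        + ∑ i : Fin k', (A ^ (i : ℕ)).mulVec (B.mulVec (u i.castSucc))
        = (A ^ (k' + 1)).mulVec x + ∑ i : Fin (k' + 1), (A ^ (i : ℕ)).mulVec (B.mulVec (u i)) := by
      rw [Fin.sum_univ_castSucc]
      simp only [Matrix.mulVec_add, Matrix.mulVec_mulVec, pow_succ, Fin.val_last,
        Fin.coe_castSucc]
      abel
    have hy : A.mulVec x + B.mulVec (u (Fin.last k')) ∈ stepSet A B U Ω k' :=
      ⟨fun i => u i.castSucc, fun i => hu _, by rw [key]; exact hmem⟩
    rcases Nat.eq_zero_or_pos k' with h0 | hpos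
    · subst h0
      obtain ⟨w, hw, hΩmem⟩ := hy
      have hΩ' : A.mulVec x + B.mulVec (u (Fin.last 0)) ∈ Ω := by
        simpa [stepSet] using hΩmem
      exact hstop hΩ'
    · exact subset_convexHull ℝ _
        (Set.mem_biUnion (Finset.mem_Icc.mpr ⟨hpos, by omega⟩) hy)
  intro x hx
  exact convexHull_min hsub hSconv hx
end
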